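/- For every integer n ≥ 1, the auxiliary quantities satisfy the summed identity Σ_{j=0}^{n−1} R_j(t) = 2β_n (R_{n−1}(t) + R_n(t)) − t r_n(t). -/

import Mathlib

/-!
Off `y = t` the weight satisfies the Pearson equation `w' = (t - 2y + γ / (y - t)) w`; since `q w`
is continuous at `t` (where `w` vanishes) and integrable together with its derivative,
integrating `(q w)'` over `ℝ` gives, for every polynomial `q`,
`∫ q' w + t ∫ q w - 2 ∫ y q w + γ ∫ q w / (y - t) = 0`.
From then on only the two linear functionals `q ↦ ∫ q w` and `q ↦ ∫ q w / (y - t)` matter.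
Writing `p_j` for the subleading coefficient of `P_j`, orthogonality evaluates every term of this
identity for `q = P_j²`, `P_n P_{n-1}` and `y P_n P_{n-1}`: the first gives
`R_j = 2 (p_j - p_{j+1}) - t`, which telescopes to `Σ_{j<n} R_j = -2 p_n - n t`, and the other two
express `γ ∫ P_n P_{n-1} w / (y - t)` and `t` times it through `h_{n-1}`, `h_n` and the `p_j`;
eliminating that integral gives the identity.
-/

open Polynomial

namespace Polynomial

variable {R : Type*} [CommRing R]

lemma degree_sub_C_coeff_mul_lt {p q : R[X]} {n : ℕ} (hp : p.Monic) (hpn : p.natDegree = n)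
    (hq : q.degree ≤ n) : (q - C (q.coeff n) * p).degree < n := by
  rw [degree_lt_iff_coeff_zero]
  intro m hm
  rw [coeff_sub, coeff_C_mul]
  rcases (show n ≤ m by exact_mod_cast hm).eq_or_lt with rfl | hlt
  · rw [← hpn, hp.coeff_natDegree, mul_one, sub_self]
  · rw [coeff_eq_zero_of_degree_lt (hq.trans_lt (by exact_mod_cast hlt)),
      coeff_eq_zero_of_natDegree_lt (p := p) (by omega), mul_zero, sub_zero]

lemma coeff_X_mul_derivative (p : R[X]) (n : ℕ) :
    (X * derivative p).coeff n = n * p.coeff n := by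
  cases n with
  | zero => simp
  | succ n => rw [coeff_X_mul, coeff_derivative, mul_comm, Nat.cast_succ]

lemma degree_X_mul_derivative_le (p : R[X]) :
    (X * derivative p).degree ≤ (p.natDegree : WithBot ℕ) := by
  rw [degree_le_iff_coeff_zero]
  intro m hm
  rw [coeff_X_mul_derivative, coeff_eq_zero_of_natDegree_lt (by exact_mod_cast hm), mul_zero]

lemma Monic.nextCoeff_X_mul {p : R[X]} (hp : p.Monic) : (X * p).nextCoeff = p.nextCoeff := by
  rw [monic_X.nextCoeff_mul hp, ← add_zero (X : R[X]), ← C_0, nextCoeff_X_add_C, zero_add]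

end Polynomial

structure IsMonicOrthogonal {R : Type*} [CommRing R] (L : R[X] →ₗ[R] R) (P : ℕ → R[X]) :
    Prop where
  monic : ∀ n, (P n).Monic
  natDegree_eq : ∀ n, (P n).natDegree = n
  orthogonal : ∀ m n, m ≠ n → L (P m * P n) = 0

namespace IsMonicOrthogonal

variable {R : Type*} [CommRing R] {L : R[X] →ₗ[R] R} {P : ℕ → R[X]}
  (hP : IsMonicOrthogonal L P)
include hP

lemma coeff_self (n : ℕ) : (P n).coeff n = 1 := by
  simpa [hP.natDegree_eq] using (hP.monic n).coeff_natDegree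

lemma apply_mul_eq_zero_of_degree_lt {n : ℕ} {q : R[X]} (hq : q.degree < n) :
    L (P n * q) = 0 := by
  suffices ∀ k ≤ n, ∀ q : R[X], q.degree < k → L (P n * q) = 0 from this n le_rfl q hq
  intro k
  induction k with
  | zero => intro _ q hq; simp [degree_eq_bot.1 (by simpa using hq)]
  | succ k ih =>
    intro hk q hq
    have hrem := degree_sub_C_coeff_mul_lt (hP.monic k) (hP.natDegree_eq k)
      (Order.le_of_lt_succ hq)
    have hsplit : P n * q = C (q.coeff k) * (P n * P k) + P n * (q - C (q.coeff k) * P k) := by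
      ring
    rw [hsplit, map_add, ← smul_eq_C_mul, map_smul, hP.orthogonal n k (by omega),
      ih (by omega) _ hrem, smul_zero, add_zero]

lemma apply_mul_of_degree_le {n : ℕ} {q : R[X]} (hq : q.degree ≤ n) :
    L (P n * q) = q.coeff n * L (P n * P n) := by
  have hrem := degree_sub_C_coeff_mul_lt (hP.monic n) (hP.natDegree_eq n) hq
  have hsplit : P n * q = C (q.coeff n) * (P n * P n) + P n * (q - C (q.coeff n) * P n) := by
    ring
  rw [hsplit, map_add, ← smul_eq_C_mul, map_smul, hP.apply_mul_eq_zero_of_degree_lt hrem,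
    smul_eq_mul, add_zero]

lemma apply_mul_of_degree_le_succ {n : ℕ} {q : R[X]} (hq : q.degree ≤ ↑(n + 1)) :
    L (P n * q) = (q.coeff n - q.coeff (n + 1) * (P (n + 1)).nextCoeff) * L (P n * P n) := by
  have hrem := degree_sub_C_coeff_mul_lt (hP.monic (n + 1)) (hP.natDegree_eq (n + 1)) hq
  have hsplit : P n * q = C (q.coeff (n + 1)) * (P n * P (n + 1))
      + P n * (q - C (q.coeff (n + 1)) * P (n + 1)) := by
    ring
  rw [hsplit, map_add, ← smul_eq_C_mul, map_smul, hP.orthogonal n (n + 1) (by omega), smul_zero,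
    zero_add, hP.apply_mul_of_degree_le (Order.le_of_lt_succ hrem), coeff_sub, coeff_C_mul,
    nextCoeff_of_natDegree_pos (by simp [hP.natDegree_eq]), hP.natDegree_eq, Nat.add_sub_cancel]

lemma apply_mul_monic_of_natDegree_eq {n : ℕ} {q : R[X]} (hq : q.Monic)
    (hqn : q.natDegree = n) : L (P n * q) = L (P n * P n) := by
  rw [hP.apply_mul_of_degree_le (hqn ▸ degree_le_natDegree), ← hqn, hq.coeff_natDegree, one_mul]

lemma apply_mul_monic_of_natDegree_eq_succ {n : ℕ} {q : R[X]} (hq : q.Monic)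
    (hqn : q.natDegree = n + 1) :
    L (P n * q) = (q.nextCoeff - (P (n + 1)).nextCoeff) * L (P n * P n) := by
  rw [hP.apply_mul_of_degree_le_succ (hqn ▸ degree_le_natDegree), ← hqn, hq.coeff_natDegree,
    one_mul, nextCoeff_of_natDegree_pos (p := q) (by omega), hqn, Nat.add_sub_cancel]

end IsMonicOrthogonal

section Pearson

variable {K : Type*} [Field K] {L M : K[X] →ₗ[K] K} {P : ℕ → K[X]} {t γ : K}

namespace IsMonicOrthogonal

variable (hP : IsMonicOrthogonal L P)
include hP

lemma degree_derivative_lt (n : ℕ) : (derivative (P n)).degree < n := by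
  simpa [degree_eq_natDegree (hP.monic n).ne_zero, hP.natDegree_eq] using
    Polynomial.degree_derivative_lt (hP.monic n).ne_zero

lemma nextCoeff_succ (n : ℕ) : (P (n + 1)).nextCoeff = (P (n + 1)).coeff n := by
  rw [nextCoeff_of_natDegree_pos (by simp [hP.natDegree_eq]), hP.natDegree_eq, Nat.add_sub_cancel]

lemma nextCoeff_zero : (P 0).nextCoeff = 0 :=
  nextCoeff_eq_zero.2 (Or.inl (hP.natDegree_eq 0))

lemma monic_X_mul (n : ℕ) : (X * P n).Monic := monic_X.mul (hP.monic n)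

lemma natDegree_X_mul (n : ℕ) : (X * P n).natDegree = n + 1 := by
  rw [Polynomial.natDegree_X_mul (hP.monic n).ne_zero, hP.natDegree_eq]

variable (hpearson : ∀ q, L (derivative q) + t * L q - 2 * L (X * q) + γ * M q = 0)
include hpearson

lemma pearson_mul_self (n : ℕ) :
    γ * M (P n * P n) = (2 * ((P n).nextCoeff - (P (n + 1)).nextCoeff) - t) * L (P n * P n) := by
  have hderiv : L (derivative (P n * P n)) = 0 := by
    rw [derivative_mul, map_add, mul_comm (derivative (P n)),
      hP.apply_mul_eq_zero_of_degree_lt (hP.degree_derivative_lt n), add_zero]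
  have hX : L (X * (P n * P n)) = ((P n).nextCoeff - (P (n + 1)).nextCoeff) * L (P n * P n) := by
    rw [mul_left_comm, hP.apply_mul_monic_of_natDegree_eq_succ (hP.monic_X_mul n)
      (hP.natDegree_X_mul n), (hP.monic n).nextCoeff_X_mul]
  linear_combination hpearson (P n * P n) - hderiv + 2 * hX

lemma pearson_mul_succ (n : ℕ) :
    γ * M (P (n + 1) * P n) = 2 * L (P (n + 1) * P (n + 1)) - (n + 1) * L (P n * P n) := by
  have hderiv : L (derivative (P (n + 1) * P n)) = (n + 1) * L (P n * P n) := by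
    rw [derivative_mul, map_add, mul_comm (derivative _),
      hP.apply_mul_of_degree_le (Order.le_of_lt_succ (hP.degree_derivative_lt (n + 1))),
      hP.apply_mul_eq_zero_of_degree_lt
        ((hP.degree_derivative_lt n).trans (by exact_mod_cast n.lt_succ_self)),
      coeff_derivative, hP.coeff_self]
    ring
  have horth : L (P (n + 1) * P n) = 0 := hP.orthogonal _ _ n.succ_ne_self
  have hX : L (X * (P (n + 1) * P n)) = L (P (n + 1) * P (n + 1)) := by
    rw [mul_left_comm, hP.apply_mul_monic_of_natDegree_eq (hP.monic_X_mul n)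
      (hP.natDegree_X_mul n)]
  linear_combination hpearson (P (n + 1) * P n) - hderiv - t * horth + 2 * hX

lemma pearson_X_mul_succ (hM : ∀ q, M (X * q) = L q + t * M q) (n : ℕ) :
    t * (γ * M (P (n + 1) * P n)) = (P (n + 1)).nextCoeff * L (P n * P n)
      + (2 * ((P n).nextCoeff - (P (n + 2)).nextCoeff) - t) * L (P (n + 1) * P (n + 1)) := by
  have horth : L (P (n + 1) * P n) = 0 := hP.orthogonal _ _ n.succ_ne_self
  have hderiv : L (derivative (X * (P (n + 1) * P n)))
      = -(P (n + 1)).nextCoeff * L (P n * P n) := by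
    have hsplit : derivative (X * (P (n + 1) * P n)) = P (n + 1) * P n
        + P n * (X * derivative (P (n + 1))) + P (n + 1) * (X * derivative (P n)) := by
      simp only [derivative_mul, derivative_X]
      ring
    have hlow : (X * derivative (P n)).degree < ↑(n + 1) :=
      (degree_X_mul_derivative_le _).trans_lt
        (by rw [hP.natDegree_eq]; exact_mod_cast n.lt_succ_self)
    have hhigh : (X * derivative (P (n + 1))).degree ≤ ↑(n + 1) := by
      simpa [hP.natDegree_eq] using degree_X_mul_derivative_le (P (n + 1))
    rw [hsplit, map_add, map_add, horth, hP.apply_mul_eq_zero_of_degree_lt hlow,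
      hP.apply_mul_of_degree_le_succ hhigh, coeff_X_mul_derivative, coeff_X_mul_derivative,
      hP.coeff_self, hP.nextCoeff_succ]
    push_cast
    ring
  have hX : L (X * (P (n + 1) * P n)) = L (P (n + 1) * P (n + 1)) := by
    rw [mul_left_comm, hP.apply_mul_monic_of_natDegree_eq (hP.monic_X_mul n)
      (hP.natDegree_X_mul n)]
  have hXX : L (X * (X * (P (n + 1) * P n)))
      = ((P n).nextCoeff - (P (n + 2)).nextCoeff) * L (P (n + 1) * P (n + 1)) := by
    have hmonic : (X * (X * P n)).Monic := monic_X.mul (hP.monic_X_mul n)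
    rw [show X * (X * (P (n + 1) * P n)) = P (n + 1) * (X * (X * P n)) by ring,
      hP.apply_mul_monic_of_natDegree_eq_succ hmonic
        (by rw [Polynomial.natDegree_X_mul (hP.monic_X_mul n).ne_zero, hP.natDegree_X_mul]),
      (hP.monic_X_mul n).nextCoeff_X_mul, (hP.monic n).nextCoeff_X_mul]
  linear_combination hpearson (X * (P (n + 1) * P n)) - hderiv - t * hX + 2 * hXX
    - γ * hM (P (n + 1) * P n) - γ * horth

theorem summed_identity_of_pearson (hM : ∀ q, M (X * q) = L q + t * M q) {h R : ℕ → K}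
    (hh : ∀ n, h n = L (P n * P n)) (hh0 : ∀ n, h n ≠ 0)
    (hR : ∀ n, R n = γ / h n * M (P n * P n)) (n : ℕ) :
    ∑ j ∈ Finset.range (n + 1), R j
      = 2 * (h (n + 1) / h n) * (R n + R (n + 1)) - t * (γ / h n * M (P (n + 1) * P n)) := by
  have hRj (j : ℕ) : R j = 2 * ((P j).nextCoeff - (P (j + 1)).nextCoeff) - t := by
    rw [hR, div_mul_eq_mul_div, hP.pearson_mul_self hpearson, ← hh, mul_div_assoc,
      div_self (hh0 j), mul_one]
  have hsum : ∑ j ∈ Finset.range (n + 1), R j = -2 * (P (n + 1)).nextCoeff - (n + 1) * t := by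
    simp_rw [hRj, Finset.sum_sub_distrib, ← Finset.mul_sum, Finset.sum_range_sub',
      hP.nextCoeff_zero, Finset.sum_const, Finset.card_range, nsmul_eq_mul]
    push_cast
    ring
  have hsucc := hP.pearson_mul_succ hpearson n
  have hXsucc := hP.pearson_X_mul_succ hpearson hM n
  rw [← hh, ← hh] at hsucc hXsucc
  rw [hsum, hRj, hRj]
  field_simp [hh0 n]
  linear_combination 2 * hXsucc - t * hsucc

end IsMonicOrthogonal

end Pearson

section Analysis

open Real MeasureTheory Filter Topology Set

theorem integral_eq_zero_of_hasDerivAt_of_ne {E : Type*} [NormedAddCommGroup E] [NormedSpace ℝ E]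
    [CompleteSpace E] {f f' : ℝ → E} {a : ℝ} (hcont : ContinuousAt f a)
    (hderiv : ∀ x ≠ a, HasDerivAt f (f' x) x) (hf' : Integrable f') (hf : Integrable f) :
    ∫ x, f' x = 0 := by
  have htop := tendsto_zero_of_hasDerivAt_of_integrableOn_Ioi
    (fun x hx => hderiv x (ne_of_gt hx)) hf'.integrableOn hf.integrableOn
  have hbot := tendsto_zero_of_hasDerivAt_of_integrableOn_Iic (a := a - 1)
    (fun x hx => hderiv x (by linarith [mem_Iic.1 hx])) hf'.integrableOn hf.integrableOn
  rw [← intervalIntegral.integral_Iic_add_Ioi (b := a) hf'.integrableOn hf'.integrableOn,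
    integral_Iic_of_hasDerivAt_of_tendsto hcont.continuousWithinAt
      (fun x hx => hderiv x (ne_of_lt hx)) hf'.integrableOn hbot,
    integral_Ioi_of_hasDerivAt_of_tendsto hcont.continuousWithinAt
      (fun x hx => hderiv x (ne_of_gt hx)) hf'.integrableOn htop]
  abel

theorem integrable_abs_rpow_mul_exp_neg_mul_sq {b s : ℝ} (hb : 0 < b) (hs : -1 < s) :
    Integrable fun x : ℝ => |x| ^ s * exp (-b * x ^ 2) := by
  have hIoi : IntegrableOn (fun x : ℝ => |x| ^ s * exp (-b * x ^ 2)) (Ioi 0) :=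
    (integrableOn_rpow_mul_exp_neg_mul_sq hb hs).congr_fun
      (fun x hx => by rw [abs_of_pos (mem_Ioi.1 hx)]) measurableSet_Ioi
  rw [← integrableOn_univ, ← Iio_union_Ici (a := (0 : ℝ)), integrableOn_union,
    integrableOn_Ici_iff_integrableOn_Ioi]
  refine ⟨?_, hIoi⟩
  rw [← (Measure.measurePreserving_neg (volume : Measure ℝ)).integrableOn_comp_preimage
    (Homeomorph.neg ℝ).measurableEmbedding]
  simpa only [Function.comp_def, neg_preimage, neg_Iio, abs_neg, neg_sq, neg_zero] using hIoi

lemma integrable_div_sub_of_abs_le {f : ℝ → ℝ} {t s C : ℝ} (hs : 0 < s)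
    (hf : AEStronglyMeasurable f)
    (hle : ∀ y, |f y| ≤ C * (|y - t| ^ s * exp (-(1 / 4) * (y - t) ^ 2))) :
    Integrable fun y => f y / (y - t) := by
  have hbound : Integrable fun y => C * (|y - t| ^ (s - 1) * exp (-(1 / 4) * (y - t) ^ 2)) :=
    ((integrable_abs_rpow_mul_exp_neg_mul_sq (b := 1 / 4) (s := s - 1) (by norm_num)
      (by linarith)).comp_sub_right t).const_mul C
  refine hbound.mono' (hf.div₀ (measurable_id.sub_const t).aestronglyMeasurable) ?_
  filter_upwards [volume.ae_ne t] with y hy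
  have hyt : 0 < |y - t| := abs_pos.2 (sub_ne_zero.2 hy)
  rw [Real.norm_eq_abs, abs_div, div_le_iff₀ hyt]
  calc |f y| ≤ C * (|y - t| ^ s * exp (-(1 / 4) * (y - t) ^ 2)) := hle y
    _ = C * (|y - t| ^ (s - 1) * exp (-(1 / 4) * (y - t) ^ 2)) * |y - t| := by
      rw [rpow_sub_one hyt.ne']
      field_simp

lemma Polynomial.exists_abs_eval_le_mul_exp (q : ℝ[X]) :
    ∃ C, 0 ≤ C ∧ ∀ y, |q.eval y| ≤ C * exp (y ^ 2 / 4) := by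
  induction q using Polynomial.induction_on' with
  | add p r hp hr =>
    obtain ⟨C₁, hC₁, h₁⟩ := hp
    obtain ⟨C₂, hC₂, h₂⟩ := hr
    refine ⟨C₁ + C₂, add_nonneg hC₁ hC₂, fun y => ?_⟩
    rw [eval_add]
    linarith [abs_add_le (p.eval y) (r.eval y), h₁ y, h₂ y]
  | monomial n a =>
    refine ⟨|a| * n.factorial * exp 1, by positivity, fun y => ?_⟩
    have hpow : |y| ^ n ≤ n.factorial * exp |y| := by
      have := Real.pow_div_factorial_le_exp _ (abs_nonneg y) n
      rwa [div_le_iff₀ (by positivity), mul_comm] at this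
    have hexp : exp |y| ≤ exp 1 * exp (y ^ 2 / 4) := by
      rw [← exp_add, exp_le_exp]
      nlinarith [sq_nonneg (|y| - 2), sq_abs y]
    calc |(monomial n a).eval y| = |a| * |y| ^ n := by simp [abs_mul, abs_pow]
      _ ≤ |a| * (n.factorial * (exp 1 * exp (y ^ 2 / 4))) := by
        gcongr
        exact hpow.trans (by gcongr)
      _ = |a| * n.factorial * exp 1 * exp (y ^ 2 / 4) := by ring

end Analysis

section PolyIntegral

open MeasureTheory

noncomputable def polyIntegral (v : ℝ → ℝ)
    (hv : ∀ q : ℝ[X], Integrable fun y => q.eval y * v y) : ℝ[X] →ₗ[ℝ] ℝ where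
  toFun q := ∫ y, q.eval y * v y
  map_add' p q := by
    simp only [eval_add, add_mul]
    exact integral_add (hv p) (hv q)
  map_smul' c q := by
    simp only [eval_smul, smul_eq_mul, mul_assoc, RingHom.id_apply]
    exact integral_const_mul c _

lemma polyIntegral_apply {v : ℝ → ℝ} (hv : ∀ q : ℝ[X], Integrable fun y => q.eval y * v y)
    (q : ℝ[X]) : polyIntegral v hv q = ∫ y, q.eval y * v y :=
  rfl

lemma polyIntegral_X_mul_div_sub {w : ℝ → ℝ} {t : ℝ}
    (hw : ∀ q : ℝ[X], Integrable fun y => q.eval y * w y)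
    (hwt : ∀ q : ℝ[X], Integrable fun y => q.eval y * (w y / (y - t))) (q : ℝ[X]) :
    polyIntegral (fun y => w y / (y - t)) hwt (X * q)
      = polyIntegral w hw q + t * polyIntegral (fun y => w y / (y - t)) hwt q := by
  simp only [polyIntegral_apply]
  rw [← integral_const_mul, ← integral_add (hw q) ((hwt q).const_mul t)]
  refine integral_congr_ae ?_
  filter_upwards [volume.ae_ne t] with y hy
  have hyt : y - t ≠ 0 := sub_ne_zero.2 hy
  simp only [eval_mul, eval_X]
  field_simp
  ring

end PolyIntegral

section Weight

open Real MeasureTheory Filter Topology Set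

noncomputable def jumpWeight (t γ A B y : ℝ) : ℝ :=
  exp (-y ^ 2 + t * y) * |y - t| ^ γ * (A + B * (if 0 < y - t then (1 : ℝ) else 0))

variable {t γ A B : ℝ}

lemma measurable_jumpWeight : Measurable (jumpWeight t γ A B) := by
  have hstep : Measurable fun y : ℝ => if 0 < y - t then (1 : ℝ) else 0 :=
    Measurable.ite (measurableSet_lt measurable_const (by fun_prop)) measurable_const
      measurable_const
  unfold jumpWeight
  fun_prop

lemma abs_jumpWeight_le (y : ℝ) :
    |jumpWeight t γ A B y| ≤ (|A| + |B|) * (|y - t| ^ γ * exp (-y ^ 2 + t * y)) := by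
  have hstep : |A + B * (if 0 < y - t then (1 : ℝ) else 0)| ≤ |A| + |B| :=
    (abs_add_le _ _).trans (by split_ifs <;> simp)
  rw [jumpWeight, abs_mul, abs_mul, abs_of_pos (exp_pos _),
    abs_of_nonneg (rpow_nonneg (abs_nonneg _) _)]
  calc exp (-y ^ 2 + t * y) * |y - t| ^ γ * |A + B * (if 0 < y - t then (1 : ℝ) else 0)|
      ≤ exp (-y ^ 2 + t * y) * |y - t| ^ γ * (|A| + |B|) := by gcongr
    _ = (|A| + |B|) * (|y - t| ^ γ * exp (-y ^ 2 + t * y)) := by ring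

lemma continuousAt_jumpWeight (hγ : 0 < γ) : ContinuousAt (jumpWeight t γ A B) t := by
  have hbound : Continuous fun y => (|A| + |B|) * (|y - t| ^ γ * exp (-y ^ 2 + t * y)) := by
    have := Real.continuous_rpow_const hγ.le
    fun_prop
  have h0 : jumpWeight t γ A B t = 0 := by simp [jumpWeight, zero_rpow hγ.ne']
  rw [ContinuousAt, h0]
  refine squeeze_zero_norm (fun y => abs_jumpWeight_le y) ?_
  simpa [zero_rpow hγ.ne'] using hbound.tendsto t

lemma sign_mul_abs_rpow_sub_one {x : ℝ} (hx : x ≠ 0) (γ : ℝ) :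
    (SignType.sign x : ℝ) * |x| ^ (γ - 1) = |x| ^ γ / x := by
  rw [rpow_sub_one (abs_ne_zero.2 hx)]
  rcases hx.lt_or_gt with hneg | hpos
  · rw [sign_neg hneg, abs_of_neg hneg]
    field_simp
    simp
  · rw [sign_pos hpos, abs_of_pos hpos]
    simp

lemma jumpWeight_eventuallyEq {y : ℝ} (hy : y ≠ t) :
    jumpWeight t γ A B =ᶠ[𝓝 y]
      fun x => exp (-x ^ 2 + t * x) * |x - t| ^ γ * (A + B * (if 0 < y - t then 1 else 0)) := by
  rcases hy.lt_or_gt with hlt | hgt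
  · filter_upwards [Iio_mem_nhds hlt] with x hx
    simp [jumpWeight, not_lt.2 (sub_nonpos.2 (mem_Iio.1 hx).le), not_lt.2 (sub_nonpos.2 hlt.le)]
  · filter_upwards [Ioi_mem_nhds hgt] with x hx
    simp [jumpWeight, sub_pos.2 (mem_Ioi.1 hx), sub_pos.2 hgt]

lemma hasDerivAt_jumpWeight {y : ℝ} (hy : y ≠ t) :
    HasDerivAt (jumpWeight t γ A B) ((t - 2 * y + γ / (y - t)) * jumpWeight t γ A B y) y := by
  have hyt : y - t ≠ 0 := sub_ne_zero.2 hy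
  have hexp : HasDerivAt (fun x => exp (-x ^ 2 + t * x))
      (exp (-y ^ 2 + t * y) * (t - 2 * y)) y :=
    ((hasDerivAt_pow 2 y).neg.add ((hasDerivAt_id y).const_mul t)).exp.congr_deriv
      (by simp; ring)
  have hrpow : HasDerivAt (fun x => |x - t| ^ γ)
      (SignType.sign (y - t) * 1 * γ * |y - t| ^ (γ - 1)) y :=
    ((hasDerivAt_abs hyt).comp y ((hasDerivAt_id y).sub_const t)).rpow_const
      (Or.inl (by simpa [sub_eq_zero] using hy))
  refine ((hexp.mul hrpow).mul_const _).congr_of_eventuallyEq (jumpWeight_eventuallyEq hy)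
    |>.congr_deriv ?_
  rw [mul_one, mul_comm _ γ, mul_assoc γ, sign_mul_abs_rpow_sub_one hyt, jumpWeight]
  field_simp

lemma exists_abs_eval_mul_jumpWeight_le (q : ℝ[X]) :
    ∃ C, ∀ y, |q.eval y * jumpWeight t γ A B y|
      ≤ C * (|y - t| ^ γ * exp (-(1 / 4) * (y - t) ^ 2)) := by
  obtain ⟨C, hC0, hC⟩ := q.exists_abs_eval_le_mul_exp
  refine ⟨C * (|A| + |B|) * exp (t ^ 2 / 2), fun y => ?_⟩
  have hexp : exp (y ^ 2 / 4) * exp (-y ^ 2 + t * y)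
      ≤ exp (t ^ 2 / 2) * exp (-(1 / 4) * (y - t) ^ 2) := by
    rw [← exp_add, ← exp_add, exp_le_exp]
    nlinarith [sq_nonneg (y - t / 2)]
  calc |q.eval y * jumpWeight t γ A B y|
      ≤ C * exp (y ^ 2 / 4) * ((|A| + |B|) * (|y - t| ^ γ * exp (-y ^ 2 + t * y))) := by
        rw [abs_mul]
        exact mul_le_mul (hC y) (abs_jumpWeight_le y) (abs_nonneg _) (by positivity)
    _ = C * (|A| + |B|) * |y - t| ^ γ * (exp (y ^ 2 / 4) * exp (-y ^ 2 + t * y)) := by ring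
    _ ≤ C * (|A| + |B|) * |y - t| ^ γ * (exp (t ^ 2 / 2) * exp (-(1 / 4) * (y - t) ^ 2)) := by
        gcongr
    _ = C * (|A| + |B|) * exp (t ^ 2 / 2) * (|y - t| ^ γ * exp (-(1 / 4) * (y - t) ^ 2)) := by
        ring

lemma integrable_eval_mul_jumpWeight (hγ : -1 < γ) (q : ℝ[X]) :
    Integrable fun y => q.eval y * jumpWeight t γ A B y := by
  obtain ⟨C, hC⟩ := exists_abs_eval_mul_jumpWeight_le (t := t) (γ := γ) (A := A) (B := B) q
  exact (((integrable_abs_rpow_mul_exp_neg_mul_sq (b := 1 / 4) (by norm_num) hγ).comp_sub_right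
    t).const_mul C).mono' (q.continuous.measurable.mul measurable_jumpWeight).aestronglyMeasurable
    (ae_of_all _ hC)

lemma integrable_eval_mul_jumpWeight_div_sub (hγ : 0 < γ) (q : ℝ[X]) :
    Integrable fun y => q.eval y * (jumpWeight t γ A B y / (y - t)) := by
  obtain ⟨C, hC⟩ := exists_abs_eval_mul_jumpWeight_le (t := t) (γ := γ) (A := A) (B := B) q
  simp_rw [← mul_div_assoc]
  exact integrable_div_sub_of_abs_le hγ
    (q.continuous.measurable.mul measurable_jumpWeight).aestronglyMeasurable hC

theorem integral_jumpWeight_pearson (hγ : 0 < γ) (q : ℝ[X]) :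
    (∫ y, (derivative q).eval y * jumpWeight t γ A B y)
      + t * (∫ y, q.eval y * jumpWeight t γ A B y)
      - 2 * (∫ y, (X * q).eval y * jumpWeight t γ A B y)
      + γ * (∫ y, q.eval y * (jumpWeight t γ A B y / (y - t))) = 0 := by
  have hint := integrable_eval_mul_jumpWeight (t := t) (A := A) (B := B) (by linarith : -1 < γ)
  have hintd := integrable_eval_mul_jumpWeight_div_sub (t := t) (A := A) (B := B) hγ
  have hderiv : ∀ y ≠ t, HasDerivAt (fun y => q.eval y * jumpWeight t γ A B y)
      ((derivative q).eval y * jumpWeight t γ A B y + t * (q.eval y * jumpWeight t γ A B y)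
        - 2 * ((X * q).eval y * jumpWeight t γ A B y)
        + γ * (q.eval y * (jumpWeight t γ A B y / (y - t)))) y := by
    intro y hy
    have hyt : y - t ≠ 0 := sub_ne_zero.2 hy
    refine ((q.hasDerivAt y).mul (hasDerivAt_jumpWeight hy)).congr_deriv ?_
    simp only [eval_mul, eval_X]
    field_simp
    ring
  have hcont : ContinuousAt (fun y => q.eval y * jumpWeight t γ A B y) t :=
    q.continuous.continuousAt.mul (continuousAt_jumpWeight hγ)
  have h₁ := hint (derivative q)
  have h₂ := (hint q).const_mul t
  have h₃ := (hint (X * q)).const_mul 2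
  have h₄ := (hintd q).const_mul γ
  have key := integral_eq_zero_of_hasDerivAt_of_ne hcont hderiv
    (((h₁.add h₂).sub h₃).add h₄) (hint q)
  rwa [integral_add ?_ h₄, integral_sub ?_ h₃, integral_add h₁ h₂, integral_const_mul,
    integral_const_mul, integral_const_mul] at key
  exacts [h₁.add h₂, (h₁.add h₂).sub h₃]

end Weight

open MeasureTheory Polynomial

theorem summed_identity_general
    (t γ A B : ℝ) (hγ : 0 < γ)
    (w : ℝ → ℝ)
    (hw : ∀ y : ℝ, w y =
      Real.exp (-y ^ 2 + t * y) * |y - t| ^ γ *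
        (A + B * (if 0 < y - t then (1 : ℝ) else 0)))
    (P : ℕ → Polynomial ℝ)
    (hmonic : ∀ n, (P n).Monic)
    (hdeg : ∀ n, (P n).natDegree = n)
    (horth : ∀ m n, m ≠ n →
      ∫ y : ℝ, (P m).eval y * (P n).eval y * w y = 0)
    (h : ℕ → ℝ)
    (hh : ∀ n, h n = ∫ y : ℝ, ((P n).eval y) ^ 2 * w y)
    (hhpos : ∀ n, 0 < h n)
    (β : ℕ → ℝ)
    (hβ : ∀ n, 1 ≤ n → β n = h n / h (n - 1))
    (R : ℕ → ℝ)
    (hR : ∀ n, R n = γ / h n * ∫ y : ℝ, ((P n).eval y) ^ 2 * w y / (y - t))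
    (r : ℕ → ℝ)
    (hr : ∀ n, 1 ≤ n → r n = γ / h (n - 1) *
      ∫ y : ℝ, (P n).eval y * (P (n - 1)).eval y * w y / (y - t)) :
    ∀ n : ℕ, 1 ≤ n →
      ∑ j ∈ Finset.range n, R j = 2 * β n * (R (n - 1) + R n) - t * r n := by
  rintro _ hn
  obtain ⟨n, rfl⟩ : ∃ n, _ = n + 1 := ⟨_, (Nat.sub_add_cancel hn).symm⟩
  obtain rfl : w = jumpWeight t γ A B := funext hw
  let L := polyIntegral _ (integrable_eval_mul_jumpWeight (t := t) (A := A) (B := B)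
    (by linarith : -1 < γ))
  let M := polyIntegral _ (integrable_eval_mul_jumpWeight_div_sub (t := t) (A := A) (B := B) hγ)
  have hP : IsMonicOrthogonal L P :=
    ⟨hmonic, hdeg, fun i j hij => by simpa [L, polyIntegral_apply] using horth i j hij⟩
  have hL (i : ℕ) : h i = L (P i * P i) := by simp [L, polyIntegral_apply, hh, sq]
  have hM (i j : ℕ) : ∫ y, (P i).eval y * (P j).eval y * jumpWeight t γ A B y / (y - t)
      = M (P i * P j) := by simp [M, polyIntegral_apply, mul_div_assoc]
  rw [hβ _ hn, hr _ hn, Nat.add_sub_cancel, hM]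
  refine hP.summed_identity_of_pearson (integral_jumpWeight_pearson hγ)
    (polyIntegral_X_mul_div_sub _ _) hL (fun i => (hhpos i).ne') (fun i => ?_) n
  rw [hR, ← hM]
  simp only [sq]

/-- For every n >= 1, sum_{j=0}^{n-1} R_j(t) = 2 beta_n (R_{n-1}(t) + R_n(t)) - t r_n(t). -/
theorem summed_identity
    (t γ A B : ℝ) (hγ : 0 < γ) (hA : 0 ≤ A) (hAB : 0 ≤ A + B)
    (hABpos : 0 < A ∨ 0 < A + B)
    (w : ℝ → ℝ)
    (hw : ∀ y : ℝ, w y =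
      Real.exp (-y ^ 2 + t * y) * |y - t| ^ γ *
        (A + B * (if 0 < y - t then (1 : ℝ) else 0)))
    (P : ℕ → Polynomial ℝ)
    (hmonic : ∀ n, (P n).Monic)
    (hdeg : ∀ n, (P n).natDegree = n)
    (horth : ∀ m n, m ≠ n →
      ∫ y : ℝ, (P m).eval y * (P n).eval y * w y = 0)
    (h : ℕ → ℝ)
    (hh : ∀ n, h n = ∫ y : ℝ, ((P n).eval y) ^ 2 * w y)
    (hhpos : ∀ n, 0 < h n)
    (β : ℕ → ℝ)
    (hβ : ∀ n, 1 ≤ n → β n = h n / h (n - 1))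
    (R : ℕ → ℝ)
    (hR : ∀ n, R n = γ / h n * ∫ y : ℝ, ((P n).eval y) ^ 2 * w y / (y - t))
    (r : ℕ → ℝ)
    (hr : ∀ n, 1 ≤ n → r n = γ / h (n - 1) *
      ∫ y : ℝ, (P n).eval y * (P (n - 1)).eval y * w y / (y - t)) :
    ∀ n : ℕ, 1 ≤ n →
      ∑ j ∈ Finset.range n, R j = 2 * β n * (R (n - 1) + R n) - t * r n :=
  summed_identity_general t γ A B hγ w hw P hmonic hdeg horth h hh hhpos β hβ R hR r hr
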